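/- For each natural number m ≥ 1, the set S_{≤m} = {y ∈ [0, 2/3] : the level set L(y) has at most m elements} is nowhere dense in ℝ (the interior of its closure is empty). -/

import Mathlib

open Set MeasureTheory ENNReal

/-- `phi x` is the distance from `x` to the nearest integer. -/
noncomputable def phi (x : ℝ) : ℝ := |x - (round x : ℤ)|

/-- The Takagi function. -/
noncomputable def T (x : ℝ) : ℝ := ∑' n : ℕ, phi (2 ^ n * x) / 2 ^ n

/-- The `n`-th binary digit of `x` (terminating expansion for dyadic rationals). -/
noncomputable def eps (n : ℕ) (x : ℝ) : ℤ := ⌊2 ^ n * x⌋ - 2 * ⌊2 ^ (n - 1) * x⌋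

/-- `D k x = ∑_{j=1}^k (-1)^{ε_j(x)}`, the excess of 0 digits over 1 digits. -/
noncomputable def D (k : ℕ) (x : ℝ) : ℤ := ∑ j ∈ Finset.Icc 1 k, (1 - 2 * eps j x)

/-- The level set of the Takagi function at level `y`. -/
def L (y : ℝ) : Set ℝ := {x | x ∈ Set.Icc (0:ℝ) 1 ∧ T x = y}

/-- `x` is a balanced dyadic rational of order `m`. -/
def BalancedOfOrder (x : ℝ) (m : ℕ) : Prop :=
  x ∈ Set.Ico (0:ℝ) 1 ∧ (∃ k : ℤ, x = (k : ℝ) / 2 ^ (2 * m)) ∧ D (2 * m) x = 0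

/-- The generation of a balanced dyadic rational of order `m`:
the number of indices `1 ≤ j ≤ 2m` with `D j x = 0`. -/
noncomputable def generation (x : ℝ) (m : ℕ) : ℕ :=
  ((Finset.Icc 1 (2 * m)).filter (fun j => D j x = 0)).card

/-- A balanced dyadic rational of order `m` is leading if `D j x ≥ 0` for all `1 ≤ j ≤ 2m`. -/
def Leading (x : ℝ) (m : ℕ) : Prop := ∀ j ∈ Finset.Icc 1 (2 * m), 0 ≤ D j x

/-- The equivalence relation whose classes are the local level sets. -/
def locSetoid : Setoid ℝ where
  r x x' := ∀ n : ℕ, 1 ≤ n → |D n x| = |D n x'|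
  iseqv := ⟨fun _ _ _ => rfl, fun h n hn => (h n hn).symm,
    fun h g n hn => (h n hn).trans (g n hn)⟩

/-- The set of local level sets contained in `L y`: the image of `L y ∩ [0,1)`
under the quotient map of `locSetoid`. -/
def locClasses (y : ℝ) : Set (Quotient locSetoid) :=
  Quotient.mk locSetoid '' (L y ∩ Set.Ico (0:ℝ) 1)

/-!
Just below its maximum `2/3` the Takagi function has large level sets: over `[1/4, 1/2]` and over
`[1/2, 3/4]` its graph is a copy of `1/2 + T/4`, so `#L(1/2 + y/4) ≥ 2 #L(y)`, and iterating this
towards the fixed point `2/3` gives `#L(y) ≥ 2^m` for `y` within `(1/4)^m/6` of `2/3`.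
Over a dyadic interval `[x, x + 2⁻ⁿ]` whose first `n` binary digits are balanced (as many `0`s
as `1`s), the graph of `T` is a copy of `T x + T/2ⁿ`. Such `x` are dense, so by continuity every
level in `[0, 2/3]` is a limit of open intervals of levels all of whose level sets have at least
`2^m > m` points; these intervals miss `S_{≤m}`.
-/

lemma phi_le_add_dist (x y : ℝ) : phi x ≤ phi y + dist x y :=
  calc phi x ≤ |x - round y| := round_le x (round y)
    _ ≤ |x - y| + |y - round y| := abs_sub_le x y _
    _ = phi y + dist x y := by rw [Real.dist_eq, add_comm]; rfl

lemma continuous_phi : Continuous phi :=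
  (LipschitzWith.of_le_add phi_le_add_dist).continuous

lemma phi_periodic : Function.Periodic phi 1 := by
  intro x
  simp only [phi, round_add_one, Int.cast_add, Int.cast_one, add_sub_add_right_eq_sub]

lemma phi_of_mem_Icc {x : ℝ} (hx : x ∈ Icc (0:ℝ) 1) : phi x = min x (1 - x) := by
  rcases hx.2.lt_or_eq with h | rfl
  · rw [phi, abs_sub_round_eq_min, Int.fract_eq_self.2 ⟨hx.1, h⟩]
  · simp [phi]

lemma norm_phi_div_le (x : ℝ) (n : ℕ) : ‖phi (2 ^ n * x) / 2 ^ n‖ ≤ (1 / 2) ^ n := by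
  rw [Real.norm_eq_abs, abs_of_nonneg (div_nonneg (abs_nonneg _) (by positivity)), one_div_pow]
  gcongr
  exact (abs_sub_round _).trans (by norm_num)

lemma summable_T (x : ℝ) : Summable fun n : ℕ => phi (2 ^ n * x) / 2 ^ n :=
  .of_norm_bounded summable_geometric_two (norm_phi_div_le x)

lemma continuous_T : Continuous T :=
  continuous_tsum (fun _ => (continuous_phi.comp (continuous_const_mul _)).div_const _)
    summable_geometric_two fun n x => norm_phi_div_le x n

lemma T_zero : T 0 = 0 := by
  simp [T, phi]

lemma T_periodic : Function.Periodic T 1 := by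
  intro x
  refine tsum_congr fun n => ?_
  have h := phi_periodic.nat_mul (2 ^ n) (2 ^ n * x)
  push_cast at h
  rw [mul_one] at h
  rw [mul_add, mul_one, h]

lemma T_eq_phi_add (x : ℝ) : T x = phi x + T (2 * x) / 2 := by
  rw [T, (summable_T x).tsum_eq_zero_add, T, ← tsum_div_const]
  congr 1
  · simp
  · refine tsum_congr fun n => ?_
    rw [show (2:ℝ) ^ (n + 1) * x = 2 ^ n * (2 * x) by ring, pow_succ, div_div]

lemma T_div_two {t : ℝ} (ht : t ∈ Icc (0:ℝ) 1) : T (t / 2) = t / 2 + T t / 2 := by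
  rw [T_eq_phi_add, phi_of_mem_Icc ⟨by linarith [ht.1], by linarith [ht.2]⟩,
    min_eq_left (by linarith [ht.2]), mul_div_cancel₀ _ two_ne_zero]

lemma T_one_add_div_two {t : ℝ} (ht : t ∈ Icc (0:ℝ) 1) :
    T ((1 + t) / 2) = (1 - t) / 2 + T t / 2 := by
  rw [T_eq_phi_add, phi_of_mem_Icc ⟨by linarith [ht.1], by linarith [ht.2]⟩,
    min_eq_right (by linarith [ht.1]), mul_div_cancel₀ _ two_ne_zero, add_comm 1 t,
    T_periodic]
  ring

lemma T_one_third : T (1 / 3) = 2 / 3 := by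
  have h₁ := T_div_two (t := 2 / 3) ⟨by norm_num, by norm_num⟩
  have h₂ := T_one_add_div_two (t := 1 / 3) ⟨by norm_num, by norm_num⟩
  norm_num at h₁ h₂
  linarith

lemma Icc_subset_image_T : Icc (0:ℝ) (2 / 3) ⊆ T '' Icc 0 (1 / 3) := by
  have h := intermediate_value_Icc (by norm_num : (0:ℝ) ≤ 1 / 3) continuous_T.continuousOn
  rwa [T_zero, T_one_third] at h

/-- The dyadic rational with binary digits `l` (`true` is the digit `1`); for it,
`binExcess l` is `D l.length (binVal l)`. -/
noncomputable def binVal : List Bool → ℝ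
  | [] => 0
  | b :: l => ((if b then 1 else 0) + binVal l) / 2

def binExcess (l : List Bool) : ℤ :=
  (l.map fun b => if b then -1 else 1).sum

lemma binVal_nonneg (l : List Bool) : 0 ≤ binVal l := by
  induction l with
  | nil => simp [binVal]
  | cons b l ih => simp only [binVal]; split_ifs <;> positivity

lemma binVal_add_le_one (l : List Bool) : binVal l + 1 / 2 ^ l.length ≤ 1 := by
  induction l with
  | nil => simp [binVal]
  | cons b l ih =>
    simp only [binVal, List.length_cons, pow_succ]
    have := binVal_nonneg l
    split_ifs
    · calc (1 + binVal l) / 2 + 1 / (2 ^ l.length * 2)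
          = (1 + (binVal l + 1 / 2 ^ l.length)) / 2 := by field_simp; ring
        _ ≤ 1 := by linarith
    · calc (0 + binVal l) / 2 + 1 / (2 ^ l.length * 2)
          = (binVal l + 1 / 2 ^ l.length) / 2 := by field_simp; ring
        _ ≤ 1 := by linarith

lemma binVal_mem_Icc (l : List Bool) : binVal l ∈ Icc (0:ℝ) 1 :=
  ⟨binVal_nonneg l,
    by linarith [binVal_add_le_one l, (by positivity : (0:ℝ) < 1 / 2 ^ l.length)]⟩

lemma binVal_append (l e : List Bool) :
    binVal (l ++ e) = binVal l + binVal e / 2 ^ l.length := by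
  induction l with
  | nil => simp [binVal]
  | cons b l ih =>
    simp only [List.cons_append, binVal, List.length_cons, pow_succ, ih]
    ring

lemma exists_binVal_le_lt (k : ℕ) {x : ℝ} (hx : x ∈ Ico (0:ℝ) 1) :
    ∃ l : List Bool, l.length = k ∧ binVal l ≤ x ∧ x < binVal l + 1 / 2 ^ k := by
  induction k generalizing x with
  | zero => exact ⟨[], rfl, by simpa [binVal] using hx.1, by simpa [binVal] using hx.2⟩
  | succ k ih =>
    have hk : (1:ℝ) / 2 ^ (k + 1) = 1 / 2 ^ k / 2 := by rw [pow_succ, div_div]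
    rcases lt_or_ge x (1 / 2) with h | h
    · obtain ⟨l, hl, h₁, h₂⟩ := ih (x := 2 * x) ⟨by linarith [hx.1], by linarith⟩
      refine ⟨false :: l, by simp [hl], ?_, ?_⟩ <;>
        simp only [binVal, hk, Bool.false_eq_true, ↓reduceIte] <;> linarith
    · obtain ⟨l, hl, h₁, h₂⟩ := ih (x := 2 * x - 1) ⟨by linarith, by linarith [hx.2]⟩
      refine ⟨true :: l, by simp [hl], ?_, ?_⟩ <;>
        simp only [binVal, hk, ↓reduceIte] <;> linarith

/-- Appending `|binExcess l|` equal digits balances `l` without leaving its dyadic interval. -/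
lemma exists_binExcess_eq_zero_approx (k : ℕ) {x : ℝ} (hx : x ∈ Ico (0:ℝ) 1) :
    ∃ l : List Bool, binExcess l = 0 ∧ k ≤ l.length ∧ |binVal l - x| < 1 / 2 ^ k := by
  obtain ⟨l, hl, h₁, h₂⟩ := exists_binVal_le_lt k hx
  set e := List.replicate (binExcess l).toNat true ++ List.replicate (-binExcess l).toNat false
  refine ⟨l ++ e, ?_, by simp [hl], ?_⟩
  · simp only [e, binExcess, List.map_append, List.map_replicate, ↓reduceIte, Bool.false_eq_true,
      List.sum_append, List.sum_replicate, Int.nsmul_eq_mul, Int.ofNat_toNat, mul_neg, mul_one]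
    omega
  · have he : binVal e / 2 ^ k < 1 / 2 ^ k := by
      gcongr
      linarith [binVal_add_le_one e, (by positivity : (0:ℝ) < 1 / 2 ^ e.length)]
    have he₀ : 0 ≤ binVal e / 2 ^ k := div_nonneg (binVal_nonneg e) (by positivity)
    rw [binVal_append, hl, abs_lt]
    constructor <;> linarith

lemma T_binVal_add (l : List Bool) {t : ℝ} (ht : t ∈ Icc (0:ℝ) 1) :
    T (binVal l + t / 2 ^ l.length) =
      T (binVal l) + (binExcess l * t + T t) / 2 ^ l.length := by
  induction l with
  | nil => simp [binVal, binExcess, T_zero]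
  | cons b l ih =>
    have hu : binVal l + t / 2 ^ l.length ∈ Icc (0:ℝ) 1 := by
      have : t / 2 ^ l.length ≤ 1 / 2 ^ l.length := by gcongr; exact ht.2
      exact ⟨add_nonneg (binVal_nonneg l) (div_nonneg ht.1 (by positivity)),
        by linarith [binVal_add_le_one l]⟩
    cases b
    · have hx : binVal (false :: l) + t / 2 ^ (false :: l).length
          = (binVal l + t / 2 ^ l.length) / 2 := by
        simp only [binVal, List.length_cons, pow_succ, Bool.false_eq_true, ↓reduceIte, zero_add]
        ring
      rw [hx, T_div_two hu, ih]
      simp only [binVal, binExcess, List.length_cons, pow_succ, Bool.false_eq_true, ↓reduceIte,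
        zero_add, List.map_cons, List.sum_cons]
      rw [T_div_two (binVal_mem_Icc l)]
      push_cast
      ring
    · have hx : binVal (true :: l) + t / 2 ^ (true :: l).length
          = (1 + (binVal l + t / 2 ^ l.length)) / 2 := by
        simp only [binVal, List.length_cons, pow_succ, ↓reduceIte]
        ring
      rw [hx, T_one_add_div_two hu, ih]
      simp only [binVal, binExcess, List.length_cons, pow_succ, ↓reduceIte, List.map_cons,
        List.sum_cons]
      rw [T_one_add_div_two (binVal_mem_Icc l)]
      push_cast
      ring

lemma T_binVal_add_of_binExcess_eq_zero {l : List Bool} (hl : binExcess l = 0) {t : ℝ}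
    (ht : t ∈ Icc (0:ℝ) 1) :
    T (binVal l + t / 2 ^ l.length) = T (binVal l) + T t / 2 ^ l.length := by
  rw [T_binVal_add l ht, hl]
  simp

lemma image_L_subset {a c d : ℝ} (ha : 0 ≤ a) (hd : 0 < d) (had : a + 1 / d ≤ 1)
    (hT : ∀ t ∈ Icc (0:ℝ) 1, T (a + t / d) = c + T t / d) (y : ℝ) :
    (fun t => a + t / d) '' L y ⊆ L (c + y / d) := by
  rintro _ ⟨t, ⟨ht, rfl⟩, rfl⟩
  have : t / d ≤ 1 / d := by gcongr; exact ht.2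
  exact ⟨⟨add_nonneg ha (div_nonneg ht.1 hd.le), by linarith⟩, hT t ht⟩

lemma encard_image_L {a d : ℝ} (hd : 0 < d) (y : ℝ) :
    ((fun t => a + t / d) '' L y).encard = (L y).encard :=
  InjOn.encard_image fun _ _ _ _ h => (div_left_inj' hd.ne').1 (add_left_cancel h)

lemma T_quarter_add_div_four {t : ℝ} (ht : t ∈ Icc (0:ℝ) 1) :
    T (1 / 4 + t / 4) = 1 / 2 + T t / 4 := by
  have h := T_div_two (t := (1 + t) / 2) ⟨by linarith [ht.1], by linarith [ht.2]⟩
  rw [T_one_add_div_two ht] at h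
  rw [show 1 / 4 + t / 4 = (1 + t) / 2 / 2 by ring, h]
  ring

lemma T_half_add_div_four {t : ℝ} (ht : t ∈ Icc (0:ℝ) 1) :
    T (1 / 2 + t / 4) = 1 / 2 + T t / 4 := by
  have h := T_one_add_div_two (t := t / 2) ⟨by linarith [ht.1], by linarith [ht.2]⟩
  rw [T_div_two ht] at h
  rw [show 1 / 2 + t / 4 = (1 + t / 2) / 2 by ring, h]
  ring

lemma two_mul_encard_L_le {y : ℝ} (hy : 0 < y) :
    2 * (L y).encard ≤ (L (1 / 2 + y / 4)).encard := by
  have hA := image_L_subset (a := 1 / 4) (by norm_num) (by norm_num : (0:ℝ) < 4) (by norm_num)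
    (fun _ => T_quarter_add_div_four) y
  have hB := image_L_subset (a := 1 / 2) (by norm_num) (by norm_num : (0:ℝ) < 4) (by norm_num)
    (fun _ => T_half_add_div_four) y
  have hdisj : Disjoint ((fun t => 1 / 4 + t / 4) '' L y) ((fun t => 1 / 2 + t / 4) '' L y) := by
    rw [Set.disjoint_left]
    rintro _ ⟨s, ⟨hs, -⟩, rfl⟩ ⟨t, ⟨ht, hTt⟩, hst⟩
    have ht₀ : t ≠ 0 := by rintro rfl; rw [T_zero] at hTt; linarith
    have := lt_of_le_of_ne ht.1 (Ne.symm ht₀)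
    linarith [hs.2]
  calc 2 * (L y).encard
      = ((fun t => 1 / 4 + t / 4) '' L y ∪ (fun t => 1 / 2 + t / 4) '' L y).encard := by
        rw [encard_union_eq hdisj, encard_image_L (by norm_num), encard_image_L (by norm_num),
          two_mul]
    _ ≤ _ := encard_le_encard (union_subset hA hB)

lemma two_pow_le_encard_L (m : ℕ) {y : ℝ} (hy : y ∈ Ioc (2 / 3 - (1 / 4) ^ m / 6) (2 / 3)) :
    (2 ^ m : ℕ∞) ≤ (L y).encard := by
  induction m generalizing y with
  | zero =>
    obtain ⟨x, hx, hTx⟩ := Icc_subset_image_T ⟨by norm_num at hy; linarith [hy.1], hy.2⟩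
    simpa using ⟨x, ⟨hx.1, by linarith [hx.2]⟩, hTx⟩
  | succ m ih =>
    have h4' : (1 / 4 : ℝ) ^ m ≤ 1 := pow_le_one₀ (by norm_num) (by norm_num)
    have hy' : 4 * y - 2 ∈ Ioc (2 / 3 - (1 / 4) ^ m / 6) (2 / 3) := by
      rw [pow_succ] at hy
      constructor <;> linarith [hy.1, hy.2]
    calc (2 ^ (m + 1) : ℕ∞) = 2 * 2 ^ m := by rw [pow_succ, mul_comm]
      _ ≤ 2 * (L (4 * y - 2)).encard := by gcongr; exact ih hy'
      _ ≤ (L y).encard := by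
        convert two_mul_encard_L_le (y := 4 * y - 2) (by linarith [hy'.1]) using 3
        ring

lemma two_pow_le_encard_L_binVal_add (m : ℕ) {l : List Bool} (hl : binExcess l = 0) {w : ℝ}
    (hw : w ∈ Ioc (2 / 3 - (1 / 4) ^ m / 6) (2 / 3)) :
    (2 ^ m : ℕ∞) ≤ (L (T (binVal l) + w / 2 ^ l.length)).encard :=
  calc (2 ^ m : ℕ∞) ≤ (L w).encard := two_pow_le_encard_L m hw
    _ = ((fun t => binVal l + t / 2 ^ l.length) '' L w).encard :=
      (encard_image_L (by positivity) w).symm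
    _ ≤ _ := encard_le_encard <| image_L_subset (binVal_nonneg l) (by positivity)
      (binVal_add_le_one l) (fun _ => T_binVal_add_of_binExcess_eq_zero hl) w

lemma exists_mem_interior_two_pow_le_encard_L_near (m : ℕ) {l : List Bool}
    (hl : binExcess l = 0) :
    ∃ y ∈ interior {y | (2 ^ m : ℕ∞) ≤ (L y).encard},
      |y - T (binVal l)| < 1 / 2 ^ l.length := by
  set n := l.length
  have hn : (0:ℝ) < 2 ^ n := by positivity
  set c : ℝ := (1 / 4) ^ m / 6
  have hc : 0 < c := by positivity
  have hc' : c ≤ 1 / 6 := by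
    have : (1 / 4 : ℝ) ^ m ≤ 1 := pow_le_one₀ (by norm_num) (by norm_num)
    simp only [c]; linarith
  set U := (fun y => (y - T (binVal l)) * 2 ^ n) ⁻¹' Ioo (2 / 3 - c) (2 / 3)
  have hUopen : IsOpen U := isOpen_Ioo.preimage (by fun_prop)
  have hU : U ⊆ {y | (2 ^ m : ℕ∞) ≤ (L y).encard} := by
    intro y hy
    have := two_pow_le_encard_L_binVal_add m hl (w := (y - T (binVal l)) * 2 ^ n)
      ⟨hy.1, hy.2.le⟩
    rwa [mul_div_cancel_right₀ _ hn.ne', add_sub_cancel] at this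
  refine ⟨T (binVal l) + (2 / 3 - c / 2) / 2 ^ n, interior_maximal hU hUopen ?_, ?_⟩
  · simp only [U, mem_preimage, add_sub_cancel_left, div_mul_cancel₀ _ hn.ne', mem_Ioo]
    constructor <;> linarith
  · rw [add_sub_cancel_left, abs_of_pos (div_pos (by linarith) hn)]
    gcongr
    linarith

lemma Icc_subset_closure_interior_two_pow_le_encard_L (m : ℕ) :
    Icc (0:ℝ) (2 / 3) ⊆ closure (interior {y | (2 ^ m : ℕ∞) ≤ (L y).encard}) := by
  rintro _ hy₀
  obtain ⟨x₀, hx₀, rfl⟩ := Icc_subset_image_T hy₀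
  rw [Metric.mem_closure_iff]
  intro ε hε
  obtain ⟨δ, hδ, hTδ⟩ := Metric.continuous_iff.mp continuous_T x₀ (ε / 2) (half_pos hε)
  obtain ⟨k, hk⟩ :=
    exists_pow_lt_of_lt_one (lt_min hδ (half_pos hε)) (by norm_num : (1 / 2 : ℝ) < 1)
  rw [one_div_pow] at hk
  obtain ⟨l, hl, hkl, hlx⟩ :=
    exists_binExcess_eq_zero_approx k ⟨hx₀.1, by linarith [hx₀.2]⟩
  obtain ⟨y, hy, hyl⟩ := exists_mem_interior_two_pow_le_encard_L_near m hl
  refine ⟨y, hy, ?_⟩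
  have hTx : dist (T x₀) (T (binVal l)) < ε / 2 := by
    rw [dist_comm]
    exact hTδ _ (hlx.trans (hk.trans_le (min_le_left _ _)))
  have hly : dist (T (binVal l)) y < ε / 2 := by
    rw [dist_comm, Real.dist_eq]
    calc _ < 1 / 2 ^ l.length := hyl
      _ ≤ 1 / 2 ^ k := by gcongr; norm_num
      _ < ε / 2 := hk.trans_le (min_le_right _ _)
  linarith [dist_triangle (T x₀) (T (binVal l)) y]

lemma isNowhereDense_of_subset_closure_interior {X : Type*} [TopologicalSpace X]
    {s c a : Set X} (hc : IsClosed c) (hsc : s ⊆ c) (hca : c ⊆ closure (interior a))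
    (hsa : Disjoint s a) : IsNowhereDense s := by
  refine IsNowhereDense.mono (subset_sdiff.2 ⟨hsc, hsa.mono_right interior_subset⟩) ?_
  rw [(hc.sdiff isOpen_interior).isNowhereDense_iff]
  have hdisj : Disjoint (interior (c \ interior a)) (closure (interior a)) :=
    (disjoint_sdiff_left.mono_left interior_subset).closure_right isOpen_interior
  exact hdisj.eq_bot_of_le (interior_subset.trans (sdiff_subset.trans hca))

theorem stmt10_general (m : ℕ) :
    IsNowhereDense {y : ℝ | y ∈ Set.Icc (0:ℝ) (2/3) ∧ (L y).encard ≤ m} := by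
  refine isNowhereDense_of_subset_closure_interior isClosed_Icc (fun y hy => hy.1)
    (Icc_subset_closure_interior_two_pow_le_encard_L m) ?_
  rw [Set.disjoint_left]
  rintro y ⟨-, hy⟩ (hy' : (2 ^ m : ℕ∞) ≤ (L y).encard)
  have : (2 ^ m : ℕ∞) ≤ m := hy'.trans hy
  exact (Nat.lt_two_pow_self (n := m)).not_ge (by exact_mod_cast this)

theorem stmt10 (m : ℕ) (hm : 1 ≤ m) :
    IsNowhereDense {y : ℝ | y ∈ Set.Icc (0:ℝ) (2/3) ∧ (L y).encard ≤ m} :=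
  stmt10_general m
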